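/- arXiv:2205.12942 — 6 statements merged into one kernel-verified Lean document; each statement's English description precedes it below -/
import Mathlib

section
/- Let B ⊆ ∂φ(M) and B′ ⊆ ∂φ′(M) be boundary sets of a manifold M under envelopments φ and φ′, and let U ⊆ M be open. If B is strongly attached to U and B covers B′ (B ▷ B′), then B′ is strongly attached to U. -/
open scoped Manifold
open Set Filter Topology

universe u

/-- An *envelopment* of a manifold `M` (modelled on `I`): a smooth embedding of `M` into a
smooth manifold of the same dimension (same model), whose target is Hausdorff, connected and
paracompact; being an embedding of equidimensional manifolds, its image is open. -/
structure Envelopment {E H : Type u} [NormedAddCommGroup E] [NormedSpace ℝ E]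
    [TopologicalSpace H] (I : ModelWithCorners ℝ E H)
    (M : Type u) [TopologicalSpace M] [ChartedSpace H M] : Type (u + 1) where
  carrier : Type u
  [ts : TopologicalSpace carrier]
  [t2 : T2Space carrier]
  [conn : ConnectedSpace carrier]
  [pc : ParacompactSpace carrier]
  [cs : ChartedSpace H carrier]
  [sm : IsManifold I (⊤ : ℕ∞) carrier]
  map : M → carrier
  smooth : ContMDiff I I (⊤ : ℕ∞) map
  immersion : ∀ x : M, Function.Injective (mfderiv I I map x)
  emb : IsOpenEmbedding map

attribute [instance] Envelopment.ts Envelopment.t2 Envelopment.conn Envelopment.pc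
  Envelopment.cs Envelopment.sm

variable {E H : Type u} [NormedAddCommGroup E] [NormedSpace ℝ E] [TopologicalSpace H]
variable {I : ModelWithCorners ℝ E H}
variable {M : Type u} [TopologicalSpace M] [ChartedSpace H M]

/-- A *boundary set*: a nonempty subset of the topological boundary `∂φ(M)` of the image of an
envelopment `φ`. -/
structure BoundarySet {E H : Type u} [NormedAddCommGroup E] [NormedSpace ℝ E]
    [TopologicalSpace H] (I : ModelWithCorners ℝ E H)
    (M : Type u) [TopologicalSpace M] [ChartedSpace H M] : Type (u + 1) where
  env : Envelopment I M
  set : Set env.carrier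
  nonempty : set.Nonempty
  subset_frontier : set ⊆ frontier (Set.range env.map)

/-- `B` covers `B'` (written `B ▷ B'`): for every open neighbourhood `N` of `B` there is an
open neighbourhood `N'` of `B'` with `φ(φ'⁻¹(N' ∩ φ'(M))) ⊆ N`. -/
def Covers (B B' : BoundarySet I M) : Prop :=
  ∀ N : Set B.env.carrier, IsOpen N → B.set ⊆ N →
    ∃ N' : Set B'.env.carrier, IsOpen N' ∧ B'.set ⊆ N' ∧
      B.env.map '' (B'.env.map ⁻¹' N') ⊆ N

theorem covers_refl (B : BoundarySet I M) : Covers B B :=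
  fun N hN hBN => ⟨N, hN, hBN, Set.image_preimage_subset _ _⟩

theorem covers_trans {B B' B'' : BoundarySet I M} (h : Covers B B') (h' : Covers B' B'') :
    Covers B B'' := by
  intro N hN hBN
  obtain ⟨N', hN', hB'N', hsub⟩ := h N hN hBN
  obtain ⟨N'', hN'', hB''N'', hsub'⟩ := h' N' hN' hB'N'
  refine ⟨N'', hN'', hB''N'', ?_⟩
  rintro x ⟨m, hm, rfl⟩
  exact hsub ⟨m, hsub' ⟨m, hm, rfl⟩, rfl⟩

/-- Boundary sets are equivalent when each covers the other. -/
def bsSetoid {E H : Type u} [NormedAddCommGroup E] [NormedSpace ℝ E]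
    [TopologicalSpace H] (I : ModelWithCorners ℝ E H)
    (M : Type u) [TopologicalSpace M] [ChartedSpace H M] : Setoid (BoundarySet I M) where
  r B B' := Covers B B' ∧ Covers B' B
  iseqv := ⟨fun B => ⟨covers_refl B, covers_refl B⟩, fun h => ⟨h.2, h.1⟩,
    fun h h' => ⟨covers_trans h.1 h'.1, covers_trans h'.2 h.2⟩⟩

/-- An equivalence class of boundary sets is an *abstract boundary point* when it has a
singleton representative under some envelopment. -/
def IsAbstractPoint (q : Quotient (bsSetoid I M)) : Prop :=
  ∃ B : BoundarySet I M, Quotient.mk (bsSetoid I M) B = q ∧ ∃ p, B.set = {p}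

/-- The abstract boundary `𝓑(M)`: all abstract boundary points. -/
def AbstractBoundary {E H : Type u} [NormedAddCommGroup E] [NormedSpace ℝ E]
    [TopologicalSpace H] (I : ModelWithCorners ℝ E H)
    (M : Type u) [TopologicalSpace M] [ChartedSpace H M] :=
  {q : Quotient (bsSetoid I M) // IsAbstractPoint q}

/-- The singleton boundary set `{p}` at a boundary point `p` of an envelopment. -/
def singletonBS (e : Envelopment I M) {p : e.carrier}
    (hp : p ∈ frontier (Set.range e.map)) : BoundarySet I M :=
  ⟨e, {p}, Set.singleton_nonempty p, Set.singleton_subset_iff.mpr hp⟩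

/-- The abstract boundary point `[p]` determined by a boundary point `p` of an envelopment. -/
def absOf (e : Envelopment I M) {p : e.carrier}
    (hp : p ∈ frontier (Set.range e.map)) : AbstractBoundary I M :=
  ⟨Quotient.mk (bsSetoid I M) (singletonBS e hp), singletonBS e hp, rfl, p, rfl⟩

/-- A boundary set `B ⊆ ∂φ(M)` is *strongly attached* to an open `U ⊆ M` when some open
`N ⊇ B` satisfies `N ∩ φ(M) ⊆ φ(U)`. -/
def StronglyAttached (B : BoundarySet I M) (U : Set M) : Prop :=
  ∃ N : Set B.env.carrier, IsOpen N ∧ B.set ⊆ N ∧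
    N ∩ Set.range B.env.map ⊆ B.env.map '' U

/-- An abstract boundary point is strongly attached to `U` when its representatives are. -/
def AbsStronglyAttached (x : AbstractBoundary I M) (U : Set M) : Prop :=
  ∀ B : BoundarySet I M, Quotient.mk (bsSetoid I M) B = x.1 → StronglyAttached B U

/-- `𝓑_U`: the set of abstract boundary points strongly attached to `U`. -/
def absAttachedSet (I : ModelWithCorners ℝ E H) (M : Type u) [TopologicalSpace M]
    [ChartedSpace H M] (U : Set M) : Set (AbstractBoundary I M) :=
  {x | AbsStronglyAttached x U}

/-- `M̄ = M ∪ 𝓑(M)`. -/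
def Mbar {E H : Type u} [NormedAddCommGroup E] [NormedSpace ℝ E]
    [TopologicalSpace H] (I : ModelWithCorners ℝ E H)
    (M : Type u) [TopologicalSpace M] [ChartedSpace H M] :=
  M ⊕ AbstractBoundary I M

/-- The strongly attached point topology `𝒯_sap` on `M̄`, generated by the basis
`{U ∪ 𝓑_U : U ⊆ M open}`. -/
instance : TopologicalSpace (Mbar I M) :=
  TopologicalSpace.generateFrom
    {s | ∃ U : Set M, IsOpen U ∧
      s = Sum.inl '' U ∪ Sum.inr '' absAttachedSet I M U}

/-- An open `U ⊆ M` is a *singular neighbourhood* (w.r.t. a distinguished set `𝒮` of abstract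
boundary points) when every point of `𝒮` is strongly attached to `U`. -/
def SingularNbhd (𝒮 : Set (AbstractBoundary I M)) (U : Set M) : Prop :=
  IsOpen U ∧ ∀ x ∈ 𝒮, AbsStronglyAttached x U

/-- A closed `A ⊆ M` is *singularly compact* when `A \ U` is compact for every singular
neighbourhood `U`. -/
def SingularlyCompact (𝒮 : Set (AbstractBoundary I M)) (A : Set M) : Prop :=
  IsClosed A ∧ ∀ U : Set M, SingularNbhd 𝒮 U → IsCompact (A \ U)

/-- Inclusion of `M` into `M̄`. -/
def Mbar.ofM {E H : Type u} [NormedAddCommGroup E] [NormedSpace ℝ E]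
    [TopologicalSpace H] {I : ModelWithCorners ℝ E H}
    {M : Type u} [TopologicalSpace M] [ChartedSpace H M] (p : M) : Mbar I M :=
  Sum.inl p

/-- Inclusion of the abstract boundary `𝓑(M)` into `M̄`. -/
def Mbar.ofB {E H : Type u} [NormedAddCommGroup E] [NormedSpace ℝ E]
    [TopologicalSpace H] {I : ModelWithCorners ℝ E H}
    {M : Type u} [TopologicalSpace M] [ChartedSpace H M] (x : AbstractBoundary I M) :
    Mbar I M :=
  Sum.inr x

theorem stronglyAttached_iff_preimage_subset (B : BoundarySet I M) (U : Set M) :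
    StronglyAttached B U ↔
      ∃ N : Set B.env.carrier, IsOpen N ∧ B.set ⊆ N ∧ B.env.map ⁻¹' N ⊆ U := by
  simp only [StronglyAttached, ← image_preimage_eq_inter_range,
    image_subset_image_iff B.env.emb.injective]

theorem stronglyAttached_of_covers_general
    {E H : Type u} [NormedAddCommGroup E] [NormedSpace ℝ E] [TopologicalSpace H]
    {I : ModelWithCorners ℝ E H} {M : Type u} [TopologicalSpace M] [ChartedSpace H M]
    (B B' : BoundarySet I M) (U : Set M)
    (hB : StronglyAttached B U) (hcov : Covers B B') :
    StronglyAttached B' U := by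
  obtain ⟨N, hN, hBN, hNU⟩ := (stronglyAttached_iff_preimage_subset B U).1 hB
  obtain ⟨N', hN', hB'N', hN'N⟩ := hcov N hN hBN
  exact (stronglyAttached_iff_preimage_subset B' U).2
    ⟨N', hN', hB'N', (image_subset_iff.1 hN'N).trans hNU⟩

/-- If a boundary set `B` is strongly attached to an open set `U ⊆ M` and `B` covers `B′`,
then `B′` is strongly attached to `U`. -/
theorem stronglyAttached_of_covers
    {E H : Type u} [NormedAddCommGroup E] [NormedSpace ℝ E] [TopologicalSpace H]
    {I : ModelWithCorners ℝ E H} {M : Type u} [TopologicalSpace M] [ChartedSpace H M]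
    [IsManifold I (⊤ : ℕ∞) M] [T2Space M] [ConnectedSpace M] [ParacompactSpace M]
    (B B' : BoundarySet I M) (U : Set M) (hU : IsOpen U)
    (hB : StronglyAttached B U) (hcov : Covers B B') :
    StronglyAttached B' U :=
  stronglyAttached_of_covers_general B B' U hB hcov
end

section
/- Let φ : M → M̂ be an envelopment and let σ_φ := {[p] ∈ 𝓑(M) : p ∈ ∂φ(M)}. When ∂φ(M) carries the subspace topology from M̂ and σ_φ carries the subspace topology induced by the strongly attached point topology 𝒯_sap on M̄, the map π : ∂φ(M) → σ_φ given by π(p) = [p] is a homeomorphism. -/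
open scoped Manifold
open Set Filter Topology

universe u

variable {E H : Type u} [NormedAddCommGroup E] [NormedSpace ℝ E] [TopologicalSpace H]
variable {I : ModelWithCorners ℝ E H}
variable {M : Type u} [TopologicalSpace M] [ChartedSpace H M]

/-!
A boundary set is strongly attached to `U` exactly when it lies in the open set
`interior (φ(M)ᶜ ∪ φ(U))`, so the basic open set `U ∪ 𝓑_U` of `𝒯_sap` pulls back along
`p ↦ [p]` to an open subset of `∂φ(M)`. Conversely `[q] ∈ 𝓑_U` forces `q ∈ closure φ(U)`, and
taking for `φ(U)` the trace on `φ(M)` of a closed neighbourhood of `p` inside a given open `W`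
shows that `p ↦ [p]` is open. Injectivity is the Hausdorff property of `M̂`: if `{p}` covers
`{p'}`, then `p'` lies in the closure of every neighbourhood of `p`.
-/

theorem mem_closure_of_nhds_inter_subset {X : Type*} [TopologicalSpace X] {s t N : Set X}
    {x : X} (hx : x ∈ closure s) (hN : N ∈ 𝓝 x) (hNs : N ∩ s ⊆ t) : x ∈ closure t :=
  mem_closure_of_mem_closure_union (s₁ := Nᶜ)
    (closure_mono (fun y hy => (em (y ∈ N)).elim (fun h => .inr (hNs ⟨h, hy⟩)) .inl) hx)
    (by rwa [compl_compl])

def Mbar.sapBasic (U : Set M) : Set (Mbar I M) :=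
  Sum.inl '' U ∪ Sum.inr '' absAttachedSet I M U

theorem Mbar.isOpen_sapBasic {U : Set M} (hU : IsOpen U) : IsOpen (Mbar.sapBasic (I := I) U) :=
  TopologicalSpace.GenerateOpen.basic _ ⟨U, hU, rfl⟩

theorem Mbar.ofB_mem_sapBasic_iff {x : AbstractBoundary I M} {U : Set M} :
    Mbar.ofB x ∈ Mbar.sapBasic U ↔ x ∈ absAttachedSet I M U := by
  refine ⟨?_, fun h => .inr ⟨x, h, rfl⟩⟩
  rintro (⟨_, -, h⟩ | ⟨y, hy, h⟩)
  exacts [(Sum.inl_ne_inr h).elim, Sum.inr_injective h ▸ hy]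

theorem StronglyAttached.of_covers {B B' : BoundarySet I M} {U : Set M}
    (h : Covers B' B) (hB' : StronglyAttached B' U) : StronglyAttached B U := by
  obtain ⟨N', hN', hBN', hN'U⟩ := hB'
  obtain ⟨N, hN, hBN, hNN'⟩ := h N' hN' hBN'
  refine ⟨N, hN, hBN, ?_⟩
  rintro _ ⟨hmN, m, rfl⟩
  obtain ⟨u, hu, hum⟩ := hN'U ⟨hNN' ⟨m, hmN, rfl⟩, m, rfl⟩
  exact ⟨m, B'.env.emb.injective hum ▸ hu, rfl⟩

theorem absStronglyAttached_iff_stronglyAttached {B : BoundarySet I M}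
    {x : AbstractBoundary I M} (hB : Quotient.mk (bsSetoid I M) B = x.1) {U : Set M} :
    AbsStronglyAttached x U ↔ StronglyAttached B U :=
  ⟨fun h => h B hB, fun h _ hB' => h.of_covers (Quotient.exact (hB'.trans hB.symm)).2⟩

theorem stronglyAttached_iff_subset_interior {B : BoundarySet I M} {U : Set M} :
    StronglyAttached B U ↔ B.set ⊆ interior ((range B.env.map)ᶜ ∪ B.env.map '' U) :=
  ⟨fun ⟨_, hN, hBN, hNU⟩ => hBN.trans (interior_maximal ((inter_subset _ _ _).mp hNU) hN),
    fun h => ⟨_, isOpen_interior, h, (inter_subset _ _ _).mpr interior_subset⟩⟩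

section

variable (e : Envelopment I M)

theorem absOf_mem_absAttachedSet_iff {p : e.carrier} (hp : p ∈ frontier (range e.map))
    {U : Set M} :
    absOf e hp ∈ absAttachedSet I M U ↔ p ∈ interior ((range e.map)ᶜ ∪ e.map '' U) :=
  (absStronglyAttached_iff_stronglyAttached rfl).trans
    (stronglyAttached_iff_subset_interior.trans singleton_subset_iff)

theorem continuous_ofB_absOf :
    Continuous fun p : {p : e.carrier // p ∈ frontier (range e.map)} =>
      Mbar.ofB (absOf e p.2) := by
  refine continuous_generateFrom_iff.mpr ?_
  rintro _ ⟨U, -, rfl⟩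
  have hpre : (fun p : {p // p ∈ frontier (range e.map)} => Mbar.ofB (absOf e p.2)) ⁻¹'
      Mbar.sapBasic U = Subtype.val ⁻¹' interior ((range e.map)ᶜ ∪ e.map '' U) := by
    ext ⟨p, hp⟩
    exact Mbar.ofB_mem_sapBasic_iff.trans (absOf_mem_absAttachedSet_iff e hp)
  exact hpre ▸ isOpen_interior.preimage continuous_subtype_val

theorem mem_closure_of_absOf_mem_absAttachedSet {q : e.carrier}
    (hq : q ∈ frontier (range e.map)) {U : Set M} (h : absOf e hq ∈ absAttachedSet I M U) :
    q ∈ closure (e.map '' U) :=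
  mem_closure_of_nhds_inter_subset (frontier_subset_closure hq)
    (mem_interior_iff_mem_nhds.mp ((absOf_mem_absAttachedSet_iff e hq).mp h))
    ((inter_subset _ _ _).mpr subset_rfl)

theorem exists_absOf_mem_absAttachedSet_closure_subset {p : e.carrier}
    (hp : p ∈ frontier (range e.map)) {W : Set e.carrier} (hW : IsOpen W) (hpW : p ∈ W) :
    ∃ U : Set M, IsOpen U ∧ absOf e hp ∈ absAttachedSet I M U ∧
      closure (e.map '' U) ⊆ W := by
  obtain ⟨t, ht, htc, htW⟩ := exists_mem_nhds_isClosed_subset (hW.mem_nhds hpW)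
  refine ⟨e.map ⁻¹' interior t, isOpen_interior.preimage e.emb.continuous,
    (absOf_mem_absAttachedSet_iff e hp).mpr ?_, ?_⟩
  · exact interior_maximal ((inter_subset _ _ _).mp image_preimage_eq_inter_range.superset)
      isOpen_interior (mem_interior_iff_mem_nhds.mpr ht)
  · calc closure (e.map '' (e.map ⁻¹' interior t))
        ⊆ closure t := closure_mono ((image_preimage_subset _ _).trans interior_subset)
      _ = t := htc.closure_eq
      _ ⊆ W := htW

theorem eq_of_absOf_eq {p p' : e.carrier} (hp : p ∈ frontier (range e.map))
    (hp' : p' ∈ frontier (range e.map)) (h : absOf e hp = absOf e hp') : p = p' := by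
  have hcov : Covers (singletonBS e hp) (singletonBS e hp') :=
    (Quotient.exact (congrArg Subtype.val h)).1
  have hcluster : ClusterPt p' (𝓝 p) := by
    refine (nhds_basis_opens p).clusterPt_iff_forall_mem_closure.mpr fun N ⟨hpN, hN⟩ => ?_
    obtain ⟨N', hN', hp'N', hN'N⟩ := hcov N hN (singleton_subset_iff.mpr hpN)
    exact mem_closure_of_nhds_inter_subset (frontier_subset_closure hp')
      (hN'.mem_nhds (singleton_subset_iff.mp hp'N'))
      (image_preimage_eq_inter_range.symm.subset.trans hN'N)
  exact (eq_of_nhds_neBot hcluster).symm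

end

theorem boundary_quotient_homeomorph_general
    {E H : Type u} [NormedAddCommGroup E] [NormedSpace ℝ E] [TopologicalSpace H]
    {I : ModelWithCorners ℝ E H} {M : Type u} [TopologicalSpace M] [ChartedSpace H M]
    (e : Envelopment I M) :
    IsHomeomorph (fun p : {p : e.carrier // p ∈ frontier (Set.range e.map)} =>
      (⟨Mbar.ofB (absOf e p.2), p.1, p.2, rfl⟩ :
        {z : Mbar I M // ∃ (q : e.carrier) (hq : q ∈ frontier (Set.range e.map)),
          z = Mbar.ofB (absOf e hq)})) := by
  refine ⟨(continuous_ofB_absOf e).subtype_mk _, ?_, ?_, ?_⟩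
  · rintro _ ⟨W, hW, rfl⟩
    refine isOpen_iff_forall_mem_open.mpr ?_
    rintro _ ⟨⟨p, hp⟩, hpW, rfl⟩
    obtain ⟨U, hU, hpU, hUW⟩ := exists_absOf_mem_absAttachedSet_closure_subset e hp hW hpW
    refine ⟨Subtype.val ⁻¹' Mbar.sapBasic U, ?_,
      (Mbar.isOpen_sapBasic hU).preimage continuous_subtype_val,
      Mbar.ofB_mem_sapBasic_iff.mpr hpU⟩
    rintro ⟨_, q, hq, rfl⟩ hqU
    exact ⟨⟨q, hq⟩, hUW (mem_closure_of_absOf_mem_absAttachedSet e hq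
      (Mbar.ofB_mem_sapBasic_iff.mp hqU)), rfl⟩
  · rintro ⟨p, hp⟩ ⟨p', hp'⟩ h
    exact Subtype.ext (eq_of_absOf_eq e hp hp' (Sum.inr_injective (congrArg Subtype.val h)))
  · rintro ⟨_, q, hq, rfl⟩
    exact ⟨⟨q, hq⟩, rfl⟩

/-- For an envelopment `φ : M → M̂`, the natural map `π : ∂φ(M) → σ_φ`, `p ↦ [p]`, is a
homeomorphism, where `∂φ(M)` carries the subspace topology from `M̂` and
`σ_φ = {[p] : p ∈ ∂φ(M)} ⊆ 𝓑(M)` carries the subspace topology induced by the strongly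
attached point topology on `M̄`. -/
theorem boundary_quotient_homeomorph
    {E H : Type u} [NormedAddCommGroup E] [NormedSpace ℝ E] [TopologicalSpace H]
    {I : ModelWithCorners ℝ E H} {M : Type u} [TopologicalSpace M] [ChartedSpace H M]
    [IsManifold I (⊤ : ℕ∞) M] [T2Space M] [ConnectedSpace M] [ParacompactSpace M]
    (e : Envelopment I M) :
    IsHomeomorph (fun p : {p : e.carrier // p ∈ frontier (Set.range e.map)} =>
      (⟨Mbar.ofB (absOf e p.2), p.1, p.2, rfl⟩ :
        {z : Mbar I M // ∃ (q : e.carrier) (hq : q ∈ frontier (Set.range e.map)),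
          z = Mbar.ofB (absOf e hq)})) :=
  boundary_quotient_homeomorph_general e
end

section
/- Let φ : M → M̂ be an envelopment and define π̄ : cl_{M̂}(φ(M)) → M̄ by π̄(p) = φ⁻¹(p) for p ∈ φ(M) and π̄(p) = [p] for p ∈ ∂φ(M). When cl_{M̂}(φ(M)) carries the subspace topology from M̂ and M̄ carries the strongly attached point topology 𝒯_sap, the map π̄ is a topological embedding, i.e. a homeomorphism onto its image. -/
open scoped Manifold
open Set Filter Topology

universe u

variable {E H : Type u} [NormedAddCommGroup E] [NormedSpace ℝ E] [TopologicalSpace H]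
variable {I : ModelWithCorners ℝ E H}
variable {M : Type u} [TopologicalSpace M] [ChartedSpace H M]

open Classical

/-- The natural map `π̄ : cl_{M̂}(φ(M)) → M̄` of an envelopment `φ : M → M̂`, sending
`p ∈ φ(M)` to `φ⁻¹(p) ∈ M` and a boundary point `p ∈ ∂φ(M)` to `[p] ∈ 𝓑(M)`. -/
noncomputable def pibar {E H : Type u} [NormedAddCommGroup E] [NormedSpace ℝ E]
    [TopologicalSpace H] {I : ModelWithCorners ℝ E H}
    {M : Type u} [TopologicalSpace M] [ChartedSpace H M]
    (e : Envelopment I M)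
    (c : {z : e.carrier // z ∈ closure (Set.range e.map)}) : Mbar I M :=
  if h : c.1 ∈ Set.range e.map then Mbar.ofM h.choose
  else
    Mbar.ofB (absOf e (p := c.1) (by
      have hfr : frontier (Set.range e.map)
          = closure (Set.range e.map) \ Set.range e.map := by
        rw [frontier, e.emb.isOpen_range.interior_eq]
      rw [hfr]
      exact ⟨c.2, h⟩))

/-!
For open `U ⊆ M`, the preimage `π̄⁻¹(U ∪ 𝓑_U)` is the trace on `cl φ(M)` of the largest open
`N ⊆ M̂` with `N ∩ φ(M) ⊆ φ(U)`; at a boundary point `p` this holds because every representative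
of `[p]` is covered by `{p}` and so inherits its attachment. These traces are open, so `π̄` is
continuous. As `M̂` is regular, a neighbourhood `V` of a point of `cl φ(M)` contains a closed
neighbourhood `s`, and the trace for `U = φ⁻¹(int s)` lies in `cl (int s) ⊆ V`; so `π̄` is
inducing. Injectivity on the boundary is the Hausdorff property of `M̂`: `{p}` covers `{q}` only
if `p = q`.
-/

section AttachedOpen

variable {X Y : Type*} [TopologicalSpace Y]

def attachedOpen (f : X → Y) (U : Set X) : Set Y :=
  ⋃₀ {N | IsOpen N ∧ N ∩ range f ⊆ f '' U}

variable {f : X → Y} {U : Set X}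

theorem mem_attachedOpen_iff {z : Y} :
    z ∈ attachedOpen f U ↔ ∃ N, IsOpen N ∧ z ∈ N ∧ N ∩ range f ⊆ f '' U :=
  ⟨fun ⟨N, ⟨hN, hNU⟩, hz⟩ => ⟨N, hN, hz, hNU⟩, fun ⟨N, hN, hz, hNU⟩ => ⟨N, ⟨hN, hNU⟩, hz⟩⟩

theorem isOpen_attachedOpen : IsOpen (attachedOpen f U) :=
  isOpen_sUnion fun _ hN => hN.1

theorem IsOpen.subset_attachedOpen_preimage {W : Set Y} (hW : IsOpen W) :
    W ⊆ attachedOpen f (f ⁻¹' W) :=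
  subset_sUnion_of_mem ⟨hW, image_preimage_eq_inter_range.symm.subset⟩

theorem attachedOpen_inter_closure_range_subset :
    attachedOpen f U ∩ closure (range f) ⊆ closure (f '' U) := by
  rintro z ⟨hz, hcl⟩
  obtain ⟨N, hN, hzN, hNU⟩ := mem_attachedOpen_iff.1 hz
  exact closure_mono hNU (hN.inter_closure ⟨hzN, hcl⟩)

theorem Topology.IsOpenEmbedding.map_mem_attachedOpen_iff [TopologicalSpace X]
    (hf : IsOpenEmbedding f) (hU : IsOpen U) {x : X} : f x ∈ attachedOpen f U ↔ x ∈ U := by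
  refine ⟨fun hx => ?_, fun hx => mem_attachedOpen_iff.2
    ⟨f '' U, hf.isOpenMap U hU, mem_image_of_mem f hx, inter_subset_left⟩⟩
  obtain ⟨N, -, hxN, hNU⟩ := mem_attachedOpen_iff.1 hx
  exact hf.injective.mem_set_image.1 (hNU ⟨hxN, mem_range_self x⟩)

theorem exists_isOpen_attachedOpen_inter_closure_subset [TopologicalSpace X] [RegularSpace Y]
    (hf : Continuous f) {z : Y} {V : Set Y} (hV : V ∈ 𝓝 z) :
    ∃ U, IsOpen U ∧ z ∈ attachedOpen f U ∧ attachedOpen f U ∩ closure (range f) ⊆ V := by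
  obtain ⟨s, hs, hs_closed, hsV⟩ := exists_mem_nhds_isClosed_subset hV
  refine ⟨f ⁻¹' interior s, isOpen_interior.preimage hf,
    isOpen_interior.subset_attachedOpen_preimage (mem_interior_iff_mem_nhds.2 hs), ?_⟩
  calc attachedOpen f (f ⁻¹' interior s) ∩ closure (range f)
      ⊆ closure (f '' (f ⁻¹' interior s)) := attachedOpen_inter_closure_range_subset
    _ ⊆ closure s := closure_mono ((image_preimage_subset _ _).trans interior_subset)
    _ = s := hs_closed.closure_eq
    _ ⊆ V := hsV

end AttachedOpen

def Mbar.basicOpen (U : Set M) : Set (Mbar I M) :=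
  Sum.inl '' U ∪ Sum.inr '' absAttachedSet I M U

theorem Mbar.isOpen_basicOpen {U : Set M} (hU : IsOpen U) : IsOpen (Mbar.basicOpen (I := I) U) :=
  TopologicalSpace.isOpen_generateFrom_of_mem ⟨U, hU, rfl⟩

theorem Mbar.ofM_mem_basicOpen_iff {U : Set M} {x : M} :
    Mbar.ofM x ∈ Mbar.basicOpen (I := I) U ↔ x ∈ U := by
  refine ⟨?_, fun hx => Or.inl ⟨x, hx, rfl⟩⟩
  rintro (⟨y, hy, h⟩ | ⟨y, -, h⟩)
  · exact Sum.inl_injective h ▸ hy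
  · exact absurd h Sum.inr_ne_inl

theorem Mbar.ofB_mem_basicOpen_iff {U : Set M} {x : AbstractBoundary I M} :
    Mbar.ofB x ∈ Mbar.basicOpen U ↔ AbsStronglyAttached x U := by
  refine ⟨?_, fun hx => Or.inr ⟨x, hx, rfl⟩⟩
  rintro (⟨y, -, h⟩ | ⟨y, hy, h⟩)
  · exact absurd h Sum.inl_ne_inr
  · exact Sum.inr_injective h ▸ hy

namespace Envelopment

variable (e : Envelopment I M)

theorem mem_frontier_range {z : e.carrier} (hz : z ∈ closure (range e.map))
    (h : z ∉ range e.map) : z ∈ frontier (range e.map) := by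
  rw [frontier, e.emb.isOpen_range.interior_eq]
  exact ⟨hz, h⟩

theorem eq_of_covers_singletonBS {p q : e.carrier} (hp : p ∈ frontier (range e.map))
    (hq : q ∈ frontier (range e.map)) (h : Covers (singletonBS e hp) (singletonBS e hq)) :
    p = q := by
  by_contra hne
  obtain ⟨Np, Nq, hNp, hNq, hpNp, hqNq, hdisj⟩ := t2_separation hne
  obtain ⟨N, hN, hqN, hNNp⟩ := h Np hNp (singleton_subset_iff.2 hpNp)
  obtain ⟨_, ⟨hxN, hxNq⟩, m, rfl⟩ :=
    mem_closure_iff.1 hq.1 (N ∩ Nq) (hN.inter hNq) ⟨hqN rfl, hqNq⟩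
  exact disjoint_left.1 hdisj (hNNp ⟨m, hxN, rfl⟩) hxNq

theorem absOf_injective {p q : e.carrier} (hp : p ∈ frontier (range e.map))
    (hq : q ∈ frontier (range e.map)) (h : absOf e hp = absOf e hq) : p = q :=
  e.eq_of_covers_singletonBS hp hq (Quotient.exact (congrArg Subtype.val h)).1

theorem absStronglyAttached_absOf_iff {p : e.carrier} (hp : p ∈ frontier (range e.map))
    (U : Set M) : AbsStronglyAttached (absOf e hp) U ↔ p ∈ attachedOpen e.map U := by
  rw [mem_attachedOpen_iff]
  constructor
  · intro h
    obtain ⟨N, hN, hpN, hNU⟩ := h (singletonBS e hp) rfl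
    exact ⟨N, hN, hpN rfl, hNU⟩
  · rintro ⟨N, hN, hpN, hNU⟩ B hB
    obtain ⟨N', hN', hBN', hN'N⟩ := (Quotient.exact hB).2 N hN (singleton_subset_iff.2 hpN)
    refine ⟨N', hN', hBN', ?_⟩
    rintro - ⟨hmN', m, rfl⟩
    obtain ⟨x, hx, hxm⟩ := hNU ⟨hN'N ⟨m, hmN', rfl⟩, mem_range_self m⟩
    exact ⟨m, e.emb.injective hxm ▸ hx, rfl⟩

end Envelopment

section Pibar

variable (e : Envelopment I M)

theorem pibar_of_eq_map {c : closure (range e.map)} {m : M} (h : c.1 = e.map m) :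
    pibar e c = Mbar.ofM m := by
  have hc : c.1 ∈ range e.map := ⟨m, h.symm⟩
  rw [pibar, dif_pos hc, e.emb.injective (hc.choose_spec.trans h)]

theorem pibar_of_notMem_range {c : closure (range e.map)} (h : c.1 ∉ range e.map) :
    pibar e c = Mbar.ofB (absOf e (e.mem_frontier_range c.2 h)) :=
  dif_neg h

theorem pibar_preimage_basicOpen {U : Set M} (hU : IsOpen U) :
    pibar e ⁻¹' Mbar.basicOpen U = Subtype.val ⁻¹' attachedOpen e.map U := by
  ext c
  by_cases hc : c.1 ∈ range e.map
  · obtain ⟨m, hm⟩ := hc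
    rw [mem_preimage, pibar_of_eq_map e hm.symm, Mbar.ofM_mem_basicOpen_iff, mem_preimage, ← hm,
      e.emb.map_mem_attachedOpen_iff hU]
  · rw [mem_preimage, pibar_of_notMem_range e hc, Mbar.ofB_mem_basicOpen_iff,
      e.absStronglyAttached_absOf_iff]
    rfl

theorem continuous_pibar : Continuous (pibar e) := by
  refine continuous_generateFrom_iff.2 ?_
  rintro - ⟨U, hU, rfl⟩
  exact (pibar_preimage_basicOpen e hU).symm ▸ isOpen_attachedOpen.preimage continuous_subtype_val

theorem pibar_injective : Function.Injective (pibar e) := by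
  intro c c' h
  apply Subtype.ext
  by_cases hc : c.1 ∈ range e.map <;> by_cases hc' : c'.1 ∈ range e.map
  · obtain ⟨m, hm⟩ := hc
    obtain ⟨m', hm'⟩ := hc'
    rw [pibar_of_eq_map e hm.symm, pibar_of_eq_map e hm'.symm] at h
    rw [← hm, ← hm', Sum.inl_injective h]
  · obtain ⟨m, hm⟩ := hc
    rw [pibar_of_eq_map e hm.symm, pibar_of_notMem_range e hc'] at h
    exact absurd h Sum.inl_ne_inr
  · obtain ⟨m', hm'⟩ := hc'
    rw [pibar_of_notMem_range e hc, pibar_of_eq_map e hm'.symm] at h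
    exact absurd h Sum.inr_ne_inl
  · rw [pibar_of_notMem_range e hc, pibar_of_notMem_range e hc'] at h
    exact e.absOf_injective _ _ (Sum.inr_injective h)

theorem isInducing_pibar : IsInducing (pibar e) := by
  refine isInducing_iff_nhds.2 fun c => le_antisymm (continuous_pibar e).continuousAt.le_comap ?_
  intro t ht
  obtain ⟨V, hV, hVt⟩ := mem_nhds_subtype _ _ _ |>.1 ht
  obtain ⟨U, hU, hcU, hUV⟩ :=
    exists_isOpen_attachedOpen_inter_closure_subset e.emb.continuous hV
  have hpreim := pibar_preimage_basicOpen e hU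
  refine Filter.mem_comap.2 ⟨Mbar.basicOpen U, (Mbar.isOpen_basicOpen hU).mem_nhds ?_, ?_⟩
  · change c ∈ pibar e ⁻¹' Mbar.basicOpen U
    rwa [hpreim]
  · rw [hpreim]
    exact fun c' hc' => hVt (hUV ⟨hc', c'.2⟩)

end Pibar

theorem pibar_isEmbedding_general
    {E H : Type u} [NormedAddCommGroup E] [NormedSpace ℝ E] [TopologicalSpace H]
    {I : ModelWithCorners ℝ E H} {M : Type u} [TopologicalSpace M] [ChartedSpace H M]
    (e : Envelopment I M) :
    IsEmbedding (pibar e) :=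
  ⟨isInducing_pibar e, pibar_injective e⟩

/-- For an envelopment `φ : M → M̂`, the map `π̄ : cl_{M̂}(φ(M)) → M̄` is a topological
embedding (a homeomorphism onto its image), where `cl_{M̂}(φ(M))` carries the subspace topology
from `M̂` and `M̄` carries the strongly attached point topology. -/
theorem pibar_isEmbedding
    {E H : Type u} [NormedAddCommGroup E] [NormedSpace ℝ E] [TopologicalSpace H]
    {I : ModelWithCorners ℝ E H} {M : Type u} [TopologicalSpace M] [ChartedSpace H M]
    [IsManifold I (⊤ : ℕ∞) M] [T2Space M] [ConnectedSpace M] [ParacompactSpace M]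
    (e : Envelopment I M) :
    IsEmbedding (pibar e) :=
  pibar_isEmbedding_general e
end

section
/- Let 𝒮 ⊆ 𝓑(M) be a distinguished set of abstract boundary points. If U ⊆ M is a singular neighborhood (with respect to 𝒮) and φ : M → M̂ is any envelopment, then there exists an open set Û ⊆ M̂ containing every boundary point p ∈ ∂φ(M) with [p] ∈ 𝒮, such that Û ∩ φ(M) = φ(U). -/
open scoped Manifold
open Set Filter Topology

universe u

variable {E H : Type u} [NormedAddCommGroup E] [NormedSpace ℝ E] [TopologicalSpace H]
variable {I : ModelWithCorners ℝ E H}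
variable {M : Type u} [TopologicalSpace M] [ChartedSpace H M]

/-- Witness: the union of all open `N` with `N ∩ S ⊆ A`, which contains `A` since `A` is open. -/
theorem exists_isOpen_superset_inter_eq {Y : Type*} [TopologicalSpace Y] {S A P : Set Y}
    (hA : IsOpen A) (hAS : A ⊆ S)
    (hP : ∀ p ∈ P, ∃ N : Set Y, IsOpen N ∧ p ∈ N ∧ N ∩ S ⊆ A) :
    ∃ V : Set Y, IsOpen V ∧ P ⊆ V ∧ V ∩ S = A := by
  let 𝒩 : Set (Set Y) := {N | IsOpen N ∧ N ∩ S ⊆ A}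
  refine ⟨⋃₀ 𝒩, isOpen_sUnion fun N hN => hN.1, fun p hp => ?_, ?_⟩
  · obtain ⟨N, hNo, hpN, hNS⟩ := hP p hp
    exact ⟨N, ⟨hNo, hNS⟩, hpN⟩
  · refine Subset.antisymm ?_ fun x hx => ⟨⟨A, ⟨hA, inter_subset_left⟩, hx⟩, hAS hx⟩
    rintro x ⟨⟨N, hN, hxN⟩, hxS⟩
    exact hN.2 ⟨hxN, hxS⟩

theorem AbsStronglyAttached.exists_isOpen_of_absOf {U : Set M} {e : Envelopment I M}
    {p : e.carrier} {hp : p ∈ frontier (range e.map)} (h : AbsStronglyAttached (absOf e hp) U) :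
    ∃ N : Set e.carrier, IsOpen N ∧ p ∈ N ∧ N ∩ range e.map ⊆ e.map '' U := by
  obtain ⟨N, hNo, hpN, hNU⟩ := h (singletonBS e hp) rfl
  exact ⟨N, hNo, hpN rfl, hNU⟩

theorem singularNbhd_envelopment_general
    {E H : Type u} [NormedAddCommGroup E] [NormedSpace ℝ E] [TopologicalSpace H]
    {I : ModelWithCorners ℝ E H} {M : Type u} [TopologicalSpace M] [ChartedSpace H M]
    (𝒮 : Set (AbstractBoundary I M)) (U : Set M) (hU : SingularNbhd 𝒮 U)
    (e : Envelopment I M) :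
    ∃ Uhat : Set e.carrier, IsOpen Uhat ∧
      (∀ (p : e.carrier) (hp : p ∈ frontier (Set.range e.map)),
        absOf e hp ∈ 𝒮 → p ∈ Uhat) ∧
      Uhat ∩ Set.range e.map = e.map '' U := by
  obtain ⟨Uhat, hUo, hPU, hUhat⟩ := exists_isOpen_superset_inter_eq
    (P := {p | ∃ hp : p ∈ frontier (range e.map), absOf e hp ∈ 𝒮})
    (e.emb.isOpenMap U hU.1) (image_subset_range e.map U)
    fun p ⟨_, hpS⟩ => (hU.2 _ hpS).exists_isOpen_of_absOf
  exact ⟨Uhat, hUo, fun p hp hpS => hPU ⟨hp, hpS⟩, hUhat⟩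

/-- If `U ⊆ M` is a singular neighbourhood with respect to a distinguished set `𝒮` of abstract
boundary points and `φ : M → M̂` is any envelopment, then there is an open `Û ⊆ M̂` containing
every boundary point `p ∈ ∂φ(M)` with `[p] ∈ 𝒮` such that `Û ∩ φ(M) = φ(U)`. -/
theorem singularNbhd_envelopment
    {E H : Type u} [NormedAddCommGroup E] [NormedSpace ℝ E] [TopologicalSpace H]
    {I : ModelWithCorners ℝ E H} {M : Type u} [TopologicalSpace M] [ChartedSpace H M]
    [IsManifold I (⊤ : ℕ∞) M] [T2Space M] [ConnectedSpace M] [ParacompactSpace M]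
    (𝒮 : Set (AbstractBoundary I M)) (U : Set M) (hU : SingularNbhd 𝒮 U)
    (e : Envelopment I M) :
    ∃ Uhat : Set e.carrier, IsOpen Uhat ∧
      (∀ (p : e.carrier) (hp : p ∈ frontier (Set.range e.map)),
        absOf e hp ∈ 𝒮 → p ∈ Uhat) ∧
      Uhat ∩ Set.range e.map = e.map '' U :=
  singularNbhd_envelopment_general 𝒮 U hU e
end

section
/- Let 𝒮 ⊆ 𝓑(M) be a distinguished set of abstract boundary points. If a subset S ⊆ M meets every singular neighborhood (with respect to 𝒮), then S has an accumulation point in M̄, endowed with the strongly attached point topology 𝒯_sap, belonging to 𝒮. -/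
open scoped Manifold
open Set Filter Topology

universe u

variable {E H : Type u} [NormedAddCommGroup E] [NormedSpace ℝ E] [TopologicalSpace H]
variable {I : ModelWithCorners ℝ E H}
variable {M : Type u} [TopologicalSpace M] [ChartedSpace H M]

/-! If no point of `𝒮` were an accumulation point of `S`, every `x ∈ 𝒮` would have a basic
neighbourhood `U_x ∪ 𝓑_{U_x}` missing `S`; the sets `U ∪ 𝓑_U` form a basis because strong
attachment is stable under finite intersections. The union of the `U_x` is then a singular
neighbourhood, still disjoint from `S`. -/

theorem stronglyAttached_mono {B : BoundarySet I M} {U V : Set M}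
    (h : StronglyAttached B U) (hUV : U ⊆ V) : StronglyAttached B V := by
  obtain ⟨N, hN, hBN, hsub⟩ := h
  exact ⟨N, hN, hBN, hsub.trans (image_mono hUV)⟩

theorem stronglyAttached_inter {B : BoundarySet I M} {U V : Set M}
    (hU : StronglyAttached B U) (hV : StronglyAttached B V) :
    StronglyAttached B (U ∩ V) := by
  obtain ⟨N₁, hN₁, hBN₁, hsub₁⟩ := hU
  obtain ⟨N₂, hN₂, hBN₂, hsub₂⟩ := hV
  refine ⟨N₁ ∩ N₂, hN₁.inter hN₂, subset_inter hBN₁ hBN₂, ?_⟩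
  rw [image_inter B.env.emb.injective]
  exact fun _ hx => ⟨hsub₁ ⟨hx.1.1, hx.2⟩, hsub₂ ⟨hx.1.2, hx.2⟩⟩

theorem absStronglyAttached_mono {x : AbstractBoundary I M} {U V : Set M}
    (h : AbsStronglyAttached x U) (hUV : U ⊆ V) : AbsStronglyAttached x V :=
  fun B hB => stronglyAttached_mono (h B hB) hUV

theorem absStronglyAttached_inter_iff {x : AbstractBoundary I M} {U V : Set M} :
    AbsStronglyAttached x (U ∩ V) ↔ AbsStronglyAttached x U ∧ AbsStronglyAttached x V :=
  ⟨fun h => ⟨absStronglyAttached_mono h inter_subset_left,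
      absStronglyAttached_mono h inter_subset_right⟩,
    fun h B hB => stronglyAttached_inter (h.1 B hB) (h.2 B hB)⟩

theorem absStronglyAttached_univ (x : AbstractBoundary I M) : AbsStronglyAttached x univ := by
  refine fun B _ => ⟨univ, isOpen_univ, subset_univ _, ?_⟩
  rw [image_univ]
  exact inter_subset_right

theorem singularNbhd_biUnion {𝒮 : Set (AbstractBoundary I M)}
    {U : AbstractBoundary I M → Set M} (hU : ∀ x ∈ 𝒮, IsOpen (U x))
    (hUatt : ∀ x ∈ 𝒮, AbsStronglyAttached x (U x)) :
    SingularNbhd 𝒮 (⋃ x ∈ 𝒮, U x) :=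
  ⟨isOpen_biUnion hU, fun x hx =>
    absStronglyAttached_mono (hUatt x hx) (subset_biUnion_of_mem hx)⟩

namespace Mbar

def basicOpen_s8 (U : Set M) : Set (Mbar I M) :=
  Sum.inl '' U ∪ Sum.inr '' absAttachedSet I M U

@[simp]
theorem ofM_mem_basicOpen {p : M} {U : Set M} : ofM (I := I) p ∈ basicOpen_s8 U ↔ p ∈ U := by
  -- `Mbar` is a `def`, so the image and union lemmas only apply on `M ⊕ AbstractBoundary I M`.
  change Sum.inl p ∈ (Sum.inl '' U ∪ Sum.inr '' _ : Set (M ⊕ AbstractBoundary I M)) ↔ _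
  simp

@[simp]
theorem ofB_mem_basicOpen {x : AbstractBoundary I M} {U : Set M} :
    ofB x ∈ basicOpen_s8 U ↔ AbsStronglyAttached x U := by
  change Sum.inr x ∈ (Sum.inl '' U ∪ Sum.inr '' _ : Set (M ⊕ AbstractBoundary I M)) ↔ _
  simp [absAttachedSet]

theorem basicOpen_inter (U V : Set M) :
    basicOpen_s8 (I := I) (U ∩ V) = basicOpen_s8 U ∩ basicOpen_s8 V := by
  ext (p | x)
  · exact ofM_mem_basicOpen.trans (ofM_mem_basicOpen.and ofM_mem_basicOpen).symm
  · exact ofB_mem_basicOpen.trans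
      (absStronglyAttached_inter_iff.trans (ofB_mem_basicOpen.and ofB_mem_basicOpen).symm)

theorem basicOpen_univ : basicOpen_s8 (I := I) (univ : Set M) = univ := by
  refine eq_univ_of_forall fun a => ?_
  rcases a with p | x
  · exact ofM_mem_basicOpen.2 trivial
  · exact ofB_mem_basicOpen.2 (absStronglyAttached_univ x)

theorem isTopologicalBasis_basicOpen :
    TopologicalSpace.IsTopologicalBasis
      {s : Set (Mbar I M) | ∃ U, IsOpen U ∧ s = basicOpen_s8 U} :=
  TopologicalSpace.isTopologicalBasis_of_subbasis_of_finiteInter rfl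
    { univ_mem := ⟨univ, isOpen_univ, basicOpen_univ.symm⟩
      inter_mem := by
        rintro _ ⟨U, hU, rfl⟩ _ ⟨V, hV, rfl⟩
        exact ⟨U ∩ V, hU.inter hV, (basicOpen_inter U V).symm⟩ }

theorem accPt_ofB_iff {x : AbstractBoundary I M} {S : Set M} :
    AccPt (ofB x) (𝓟 (ofM '' S)) ↔
      ∀ U : Set M, IsOpen U → AbsStronglyAttached x U → (S ∩ U).Nonempty := by
  have hx : ofM '' S \ {ofB x} = ofM '' S := sdiff_singleton_eq_self
    fun ⟨_, _, hp⟩ => Sum.inl_ne_inr hp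
  rw [accPt_principal_iff_clusterPt, hx, ← mem_closure_iff_clusterPt,
    isTopologicalBasis_basicOpen.mem_closure_iff]
  constructor
  · intro h U hU hxU
    obtain ⟨_, hpU, p, hpS, rfl⟩ := h _ ⟨U, hU, rfl⟩ (ofB_mem_basicOpen.2 hxU)
    exact ⟨p, hpS, ofM_mem_basicOpen.1 hpU⟩
  · rintro h _ ⟨U, hU, rfl⟩ hxU
    obtain ⟨p, hpS, hpU⟩ := h U hU (ofB_mem_basicOpen.1 hxU)
    exact ⟨ofM p, ofM_mem_basicOpen.2 hpU, p, hpS, rfl⟩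

end Mbar

theorem acc_pt_of_meets_every_singularNbhd_general
    {E H : Type u} [NormedAddCommGroup E] [NormedSpace ℝ E] [TopologicalSpace H]
    {I : ModelWithCorners ℝ E H} {M : Type u} [TopologicalSpace M] [ChartedSpace H M]
    (𝒮 : Set (AbstractBoundary I M)) (S : Set M)
    (hS : ∀ U : Set M, SingularNbhd 𝒮 U → (S ∩ U).Nonempty) :
    ∃ x ∈ 𝒮, AccPt (Mbar.ofB x) (Filter.principal (Mbar.ofM '' S)) := by
  by_contra! h
  simp only [Mbar.accPt_ofB_iff, not_forall] at h
  choose! U hUopen hUatt hUS using h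
  obtain ⟨p, hpS, hpU⟩ := hS _ (singularNbhd_biUnion hUopen hUatt)
  obtain ⟨x, hx, hpUx⟩ := mem_iUnion₂.mp hpU
  exact hUS x hx ⟨p, hpS, hpUx⟩

/-- If a subset `S ⊆ M` meets every singular neighbourhood (with respect to a distinguished set
`𝒮` of abstract boundary points), then `S` has an accumulation point in `M̄` (with the strongly
attached point topology) belonging to `𝒮`. -/
theorem acc_pt_of_meets_every_singularNbhd
    {E H : Type u} [NormedAddCommGroup E] [NormedSpace ℝ E] [TopologicalSpace H]
    {I : ModelWithCorners ℝ E H} {M : Type u} [TopologicalSpace M] [ChartedSpace H M]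
    [IsManifold I (⊤ : ℕ∞) M] [T2Space M] [ConnectedSpace M] [ParacompactSpace M]
    (𝒮 : Set (AbstractBoundary I M)) (S : Set M)
    (hS : ∀ U : Set M, SingularNbhd 𝒮 U → (S ∩ U).Nonempty) :
    ∃ x ∈ 𝒮, AccPt (Mbar.ofB x) (Filter.principal (Mbar.ofM '' S)) :=
  acc_pt_of_meets_every_singularNbhd_general 𝒮 S hS
end

section
/- Let 𝒮 ⊆ 𝓑(M) be a distinguished set of abstract boundary points, let V ⊆ M be open, and let C denote the closure of V in M. Suppose there exists an envelopment φ : M → M̂ such that the closure of φ(V) in M̂ is compact and every boundary point p ∈ ∂φ(M) attached to V (i.e., lying in the closure of φ(V) in M̂) satisfies [p] ∈ 𝒮. Then C is singularly compact with respect to the singular neighborhoods determined by 𝒮. -/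
open scoped Manifold
open Set Filter Topology

universe u

variable {E H : Type u} [NormedAddCommGroup E] [NormedSpace ℝ E] [TopologicalSpace H]
variable {I : ModelWithCorners ℝ E H}
variable {M : Type u} [TopologicalSpace M] [ChartedSpace H M]

/-!
Put `S = closure V \ U` for a singular neighbourhood `U`. Its image `φ(S)` lies in the compact
set `closure φ(V)`, so it suffices that `φ(S)` is closed in `M̂`. A boundary point `p` in the
closure of `φ(S)` would lie in `closure φ(V)`, so `[p] ∈ 𝒮` is strongly attached to `U`: some
neighbourhood of `p` meets `φ(M)` only inside `φ(U)`, hence misses `φ(S)`. So the closure of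
`φ(S)` stays inside the open set `φ(M)`, where `φ` is a homeomorphism onto its image.
-/

theorem Topology.IsOpenEmbedding.isClosed_image_of_disjoint_frontier
    {X Y : Type*} [TopologicalSpace X] [TopologicalSpace Y] {f : X → Y}
    (hf : IsOpenEmbedding f) {S : Set X} (hS : IsClosed S)
    (h : Disjoint (closure (f '' S)) (frontier (range f))) : IsClosed (f '' S) := by
  refine closure_subset_iff_isClosed.mp fun q hq => ?_
  have hq_range : q ∈ range f := by
    by_contra hq_not
    refine disjoint_left.mp h hq ?_
    rw [frontier, hf.isOpen_range.interior_eq]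
    exact ⟨closure_mono (image_subset_range f S) hq, hq_not⟩
  obtain ⟨m, rfl⟩ := hq_range
  have hm : m ∈ closure S := by
    rwa [hf.isEmbedding.closure_eq_preimage_closure_image S]
  exact ⟨m, hS.closure_subset hm, rfl⟩

theorem StronglyAttached.disjoint_closure_image_compl {B : BoundarySet I M} {U : Set M}
    (h : StronglyAttached B U) : Disjoint B.set (closure (B.env.map '' Uᶜ)) := by
  obtain ⟨N, hN, hBN, hNU⟩ := h
  have hN_compl : Disjoint N (B.env.map '' Uᶜ) := by
    refine disjoint_left.mpr ?_
    rintro _ hyN ⟨m, hmU, rfl⟩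
    obtain ⟨u, huU, hum⟩ := hNU ⟨hyN, m, rfl⟩
    exact hmU (B.env.emb.injective hum ▸ huU)
  exact (hN_compl.closure_right hN).mono_left hBN

theorem SingularNbhd.notMem_closure_image_compl {𝒮 : Set (AbstractBoundary I M)} {U : Set M}
    (hU : SingularNbhd 𝒮 U) (e : Envelopment I M) {p : e.carrier}
    (hp : p ∈ frontier (range e.map)) (hp𝒮 : absOf e hp ∈ 𝒮) :
    p ∉ closure (e.map '' Uᶜ) :=
  disjoint_left.mp (hU.2 _ hp𝒮 (singletonBS e hp) rfl).disjoint_closure_image_compl rfl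

theorem singularlyCompact_of_envelopment_compact_general
    {E H : Type u} [NormedAddCommGroup E] [NormedSpace ℝ E] [TopologicalSpace H]
    {I : ModelWithCorners ℝ E H} {M : Type u} [TopologicalSpace M] [ChartedSpace H M]
    (𝒮 : Set (AbstractBoundary I M)) (V : Set M)
    (e : Envelopment I M)
    (hcomp : IsCompact (closure (e.map '' V)))
    (hbd : ∀ (p : e.carrier) (hp : p ∈ frontier (Set.range e.map)),
      p ∈ closure (e.map '' V) → absOf e hp ∈ 𝒮) :
    SingularlyCompact 𝒮 (closure V) := by
  refine ⟨isClosed_closure, fun U hU => ?_⟩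
  have hS_sub : e.map '' (closure V \ U) ⊆ closure (e.map '' V) :=
    (image_mono sdiff_subset).trans (image_closure_subset_closure_image e.emb.continuous)
  have hS_frontier :
      Disjoint (closure (e.map '' (closure V \ U))) (frontier (range e.map)) := by
    refine disjoint_left.mpr fun p hpS hp => ?_
    refine hU.notMem_closure_image_compl e hp (hbd p hp ?_) ?_
    · exact closure_minimal hS_sub isClosed_closure hpS
    · exact closure_mono (image_mono fun _ hx => hx.2) hpS
  have hS_closed : IsClosed (e.map '' (closure V \ U)) :=
    e.emb.isClosed_image_of_disjoint_frontier (isClosed_closure.sdiff hU.1) hS_frontier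
  exact e.emb.isEmbedding.isCompact_iff.mpr (hcomp.of_isClosed_subset hS_closed hS_sub)

/-- If `V ⊆ M` is open and there is an envelopment `φ : M → M̂` under which the closure of
`φ(V)` is compact and every boundary point `p ∈ ∂φ(M)` attached to `V` (i.e. lying in the
closure of `φ(V)`) satisfies `[p] ∈ 𝒮`, then the closure of `V` in `M` is singularly compact
with respect to the singular neighbourhoods determined by `𝒮`. -/
theorem singularlyCompact_of_envelopment_compact
    {E H : Type u} [NormedAddCommGroup E] [NormedSpace ℝ E] [TopologicalSpace H]
    {I : ModelWithCorners ℝ E H} {M : Type u} [TopologicalSpace M] [ChartedSpace H M]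
    [IsManifold I (⊤ : ℕ∞) M] [T2Space M] [ConnectedSpace M] [ParacompactSpace M]
    (𝒮 : Set (AbstractBoundary I M)) (V : Set M) (hV : IsOpen V)
    (e : Envelopment I M)
    (hcomp : IsCompact (closure (e.map '' V)))
    (hbd : ∀ (p : e.carrier) (hp : p ∈ frontier (Set.range e.map)),
      p ∈ closure (e.map '' V) → absOf e hp ∈ 𝒮) :
    SingularlyCompact 𝒮 (closure V) :=
  singularlyCompact_of_envelopment_compact_general 𝒮 V e hcomp hbd
end
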